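/- In the exact bosonization on the square lattice, the gauge operator G_v (product of X over the four edges incident to vertex v times the flux W_f of the face northeast of v, as in Eq. (14)) commutes with every edge operator U_e and with every flux operator W_f, and the G_v pairwise commute; hence {G_v} generate an abelian stabilizer group. -/
import Mathlib

open Matrix

noncomputable section

def PX : Matrix (Fin 2) (Fin 2) ℂ := !![0, 1; 1, 0]
def PZ : Matrix (Fin 2) (Fin 2) ℂ := !![1, 0; 0, -1]

/-- Vertices of the `m × n` torus. -/
abbrev Vtx (m n : ℕ) := Fin m × Fin n

/-- Edges of the torus: a vertex together with a direction
(`false` = horizontal edge going right, `true` = vertical edge going up). -/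
abbrev Edge (m n : ℕ) := Vtx m n × Bool

/-- The four boundary edges of the face whose bottom-left corner is `f`. -/
def faceEdges (m n : ℕ) [NeZero m] [NeZero n] (f : Vtx m n) : Finset (Edge m n) :=
  {(f, false), (f, true), ((f.1, f.2 + 1), false), ((f.1 + 1, f.2), true)}

/-- The four edges incident to the vertex `v`. -/
def vertEdges (m n : ℕ) [NeZero m] [NeZero n] (v : Vtx m n) : Finset (Edge m n) :=
  {(v, false), (v, true), ((v.1 - 1, v.2), false), ((v.1, v.2 - 1), true)}

/-- The tensor product over all edges of single-qubit operators. -/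
def pauliString (m n : ℕ) (P : Edge m n → Matrix (Fin 2) (Fin 2) ℂ) :
    Matrix (Edge m n → Fin 2) (Edge m n → Fin 2) ℂ :=
  Matrix.of fun s t => ∏ e, P e (s e) (t e)

/-- Flux operator `W_f`: product of `Z` around the face `f`. -/
def Wop (m n : ℕ) [NeZero m] [NeZero n] (f : Vtx m n) :
    Matrix (Edge m n → Fin 2) (Edge m n → Fin 2) ℂ :=
  pauliString m n fun e => if e ∈ faceEdges m n f then PZ else 1

/-- The edge carrying the `Z` factor of `U_e` in the exact bosonization. -/
def Zedge (m n : ℕ) [NeZero m] [NeZero n] (e : Edge m n) : Edge m n :=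
  if e.2 then ((e.1.1 - 1, e.1.2), false) else ((e.1.1, e.1.2 - 1), true)

/-- Exact-bosonization edge operator `U_e = X_e Z_{e'}`. -/
def Uop (m n : ℕ) [NeZero m] [NeZero n] (e : Edge m n) :
    Matrix (Edge m n → Fin 2) (Edge m n → Fin 2) ℂ :=
  pauliString m n fun e' => if e' = e then PX else if e' = Zedge m n e then PZ else 1

/-- The gauge operator `G_v = W_{f(v)} ∏_{e ∋ v} X_e`, where `f(v)` is the
face northeast of `v`. -/
def Gop (m n : ℕ) [NeZero m] [NeZero n] (v : Vtx m n) :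
    Matrix (Edge m n → Fin 2) (Edge m n → Fin 2) ℂ :=
  Wop m n v * pauliString m n fun e => if e ∈ vertEdges m n v then PX else 1

/-! ### Auxiliary machinery -/

/-- Indicator of a proposition with values in `ZMod 2`. -/
def δP (p : Prop) [Decidable p] : ZMod 2 := if p then 1 else 0

lemma δP_congr {p q : Prop} [Decidable p] [Decidable q] (h : p ↔ q) : δP p = δP q := by
  simp only [δP]; split_ifs with h1 h2 <;> tauto

lemma δP_add_self {p : Prop} [Decidable p] : δP p + δP p = 0 := by
  simp only [δP]; split_ifs <;> decide

lemma δP_or_eq {α : Type*} [DecidableEq α] (x c d : α) :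
    δP (x = c ∨ x = d) = δP (x = c) + δP (x = d) + δP (x = c) * δP (c = d) := by
  by_cases h1 : x = c <;> by_cases h2 : x = d
  · have h3 : c = d := h1.symm.trans h2
    simp [δP, h1, h2, h3]; decide
  · have h3 : ¬ c = d := fun h => h2 (h1.trans h)
    simp [δP, h1, h2, h3]
  · have h3 : ¬ d = c := fun h => h1 (h2.trans h)
    have h4 : ¬ c = d := fun h => h3 h.symm
    simp [δP, h1, h2, h3, h4]
  · simp [δP, h1, h2]

lemma sum_delta_mul {α : Type*} [Fintype α] [DecidableEq α] (a : α) (f : α → ZMod 2) :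
    ∑ w : α, δP (w = a) * f w = f a := by
  simp [δP, ite_mul, one_mul, zero_mul, Finset.sum_ite_eq']

lemma Tsum {α : Type*} [Fintype α] [DecidableEq α] (a b c d : α) :
    ∑ w : α, δP (w = a ∨ w = b) * δP (w = c ∨ w = d)
      = (1 + δP (a = b)) * (δP (a = c) + δP (a = d) + δP (a = c) * δP (c = d))
        + (δP (b = c) + δP (b = d) + δP (b = c) * δP (c = d)) := by
  have step : ∀ w : α, δP (w = a ∨ w = b) * δP (w = c ∨ w = d)
      = δP (w = a) * ((1 + δP (a = b)) * δP (w = c ∨ w = d))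
        + δP (w = b) * δP (w = c ∨ w = d) := by
    intro w; rw [δP_or_eq w a b]; ring
  rw [Finset.sum_congr rfl fun w _ => step w, Finset.sum_add_distrib,
    sum_delta_mul, sum_delta_mul, δP_or_eq a c d, δP_or_eq b c d]

lemma δP_and {p q : Prop} [Decidable p] [Decidable q] : δP (p ∧ q) = δP p * δP q := by
  by_cases h1 : p <;> by_cases h2 : q <;> simp [δP, h1, h2]

/-- Single-site Pauli factor `Z^a X^b`. -/
def pf (a b : Bool) : Matrix (Fin 2) (Fin 2) ℂ :=
  (if a then PZ else 1) * (if b then PX else 1)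

lemma pf_comm (a b c d : Bool) :
    pf a b * pf c d = (if ((a && d) ^^ (b && c)) then (-1:ℂ) else 1) • (pf c d * pf a b) := by
  have h : PX * PZ = -(PZ * PX) := by
    simp only [PX, PZ, Matrix.mul_fin_two]; norm_num
  have h2 : PZ * PX * PZ = -(PZ * (PZ * PX)) := by
    rw [mul_assoc, h, mul_neg]
  have h3 : PX * (PZ * PX) = -(PZ * (PX * PX)) := by
    rw [← mul_assoc, h, neg_mul, mul_assoc]
  cases a <;> cases b <;> cases c <;> cases d <;>
    simp [pf, one_mul, mul_one, h, h2, h3, mul_assoc, neg_mul, mul_neg, neg_neg, one_smul,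
      neg_one_smul]

lemma pauliString_congr (m n : ℕ) {P Q : Edge m n → Matrix (Fin 2) (Fin 2) ℂ}
    (h : ∀ e, P e = Q e) : pauliString m n P = pauliString m n Q :=
  congrArg _ (funext h)

lemma pauliString_mul (m n : ℕ) (P Q : Edge m n → Matrix (Fin 2) (Fin 2) ℂ) :
    pauliString m n P * pauliString m n Q = pauliString m n (fun e => P e * Q e) := by
  ext s t
  simp only [pauliString, Matrix.mul_apply, Matrix.of_apply]
  rw [show (Finset.univ : Finset (Edge m n → Fin 2)) = Fintype.piFinset (fun _ => Finset.univ)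
    from (Fintype.piFinset_univ).symm]
  refine Eq.trans (Finset.sum_congr rfl fun x _ => (Finset.prod_mul_distrib).symm) ?_
  exact (Finset.prod_univ_sum (fun _ : Edge m n => (Finset.univ : Finset (Fin 2)))
    (fun e j => P e (s e) j * Q e j (t e))).symm

lemma pauliString_comm (m n : ℕ) (P Q : Edge m n → Matrix (Fin 2) (Fin 2) ℂ)
    (ε : Edge m n → ℂ) (h : ∀ e, P e * Q e = ε e • (Q e * P e)) (hε : ∏ e, ε e = 1) :
    pauliString m n P * pauliString m n Q = pauliString m n Q * pauliString m n P := by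
  rw [pauliString_mul, pauliString_mul]
  ext s t
  simp only [pauliString, Matrix.of_apply]
  calc ∏ e, (P e * Q e) (s e) (t e) = ∏ e, (ε e * (Q e * P e) (s e) (t e)) := by
        refine Finset.prod_congr rfl fun e _ => ?_
        rw [h e, Matrix.smul_apply, smul_eq_mul]
    _ = (∏ e, ε e) * ∏ e, (Q e * P e) (s e) (t e) := Finset.prod_mul_distrib
    _ = _ := by rw [hε, one_mul]

lemma sign_prod_one {m n : ℕ} (σ : Edge m n → Bool)
    (h : ∑ e : Edge m n, (if σ e then (1 : ZMod 2) else 0) = 0) :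
    ∏ e : Edge m n, (if σ e then (-1 : ℂ) else 1) = 1 := by
  have h1 : ∀ e : Edge m n, (if σ e then (-1 : ℂ) else 1)
      = (-1 : ℂ) ^ (if σ e then 1 else 0 : ℕ) := by
    intro e; cases hσ : σ e <;> simp [hσ]
  rw [Finset.prod_congr rfl fun e _ => h1 e, Finset.prod_pow_eq_pow_sum]
  refine Even.neg_one_pow ?_
  have hc : ((∑ e : Edge m n, (if σ e then 1 else 0 : ℕ) : ℕ) : ZMod 2)
      = ∑ e : Edge m n, (if σ e then (1 : ZMod 2) else 0) := by
    rw [Nat.cast_sum]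
    exact Finset.sum_congr rfl fun e _ => by cases hσ : σ e <;> simp [hσ]
  rw [even_iff_two_dvd, ← ZMod.natCast_eq_zero_iff, hc, h]

/-- The master commutation lemma. -/
lemma comm_pf (m n : ℕ) (A B C D : Edge m n → Bool)
    (h : ∑ e : Edge m n,
        ((if (A e && D e) then (1 : ZMod 2) else 0) + (if (B e && C e) then 1 else 0)) = 0) :
    pauliString m n (fun e => pf (A e) (B e)) * pauliString m n (fun e => pf (C e) (D e))
      = pauliString m n (fun e => pf (C e) (D e)) * pauliString m n (fun e => pf (A e) (B e)) := by
  refine pauliString_comm m n _ _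
    (fun e => if ((A e && D e) ^^ (B e && C e)) then (-1 : ℂ) else 1)
    (fun e => pf_comm _ _ _ _) ?_
  refine sign_prod_one _ ?_
  have key : ∀ x y : Bool, (if (x ^^ y) then (1 : ZMod 2) else 0)
      = (if x then 1 else 0) + (if y then 1 else 0) := by decide
  rw [Finset.sum_congr rfl fun e (_ : e ∈ Finset.univ) => key (A e && D e) (B e && C e), h]

/-! ### Expressing the operators as `pf`-strings -/

lemma Wop_pf (m n : ℕ) [NeZero m] [NeZero n] (f : Vtx m n) :
    Wop m n f = pauliString m n fun e => pf (decide (e ∈ faceEdges m n f)) false := by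
  unfold Wop
  refine pauliString_congr m n fun e => ?_
  by_cases h : e ∈ faceEdges m n f <;> simp [pf, h]

lemma Gop_pf (m n : ℕ) [NeZero m] [NeZero n] (v : Vtx m n) :
    Gop m n v = pauliString m n fun e =>
      pf (decide (e ∈ faceEdges m n v)) (decide (e ∈ vertEdges m n v)) := by
  unfold Gop Wop
  rw [pauliString_mul]
  refine pauliString_congr m n fun e => ?_
  by_cases h1 : e ∈ faceEdges m n v <;> by_cases h2 : e ∈ vertEdges m n v <;>
    simp [pf, h1, h2]

lemma Zedge_ne (m n : ℕ) [NeZero m] [NeZero n] (e : Edge m n) : e ≠ Zedge m n e := by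
  unfold Zedge
  cases h : e.2 <;> simp [h] <;> intro h' <;> rw [Prod.ext_iff] at h' <;>
    simp [h] at h' 

lemma Uop_pf (m n : ℕ) [NeZero m] [NeZero n] (e0 : Edge m n) :
    Uop m n e0 = pauliString m n fun e' =>
      pf (decide (e' = Zedge m n e0)) (decide (e' = e0)) := by
  unfold Uop
  refine pauliString_congr m n fun e' => ?_
  have hne := Zedge_ne m n e0
  have hne' : ¬ Zedge m n e0 = e0 := fun h => hne h.symm
  by_cases h1 : e' = e0 <;> by_cases h2 : e' = Zedge m n e0
  · exact absurd (h1.symm.trans h2) hne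
  · simp [pf, h1, h2, hne, hne']
  · simp [pf, h1, h2, hne, hne']
  · simp [pf, h1, h2, hne, hne']

/-! ### Membership lemmas -/

section Mem
variable (m n : ℕ) [NeZero m] [NeZero n]

lemma mem_vert_false (w v : Vtx m n) :
    ((w, false) ∈ vertEdges m n v) ↔ (w = v ∨ w = (v.1 - 1, v.2)) := by
  simp [vertEdges]

lemma mem_vert_true (w v : Vtx m n) :
    ((w, true) ∈ vertEdges m n v) ↔ (w = v ∨ w = (v.1, v.2 - 1)) := by
  simp [vertEdges]

lemma mem_face_false (w f : Vtx m n) :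
    ((w, false) ∈ faceEdges m n f) ↔ (w = f ∨ w = (f.1, f.2 + 1)) := by
  simp [faceEdges]

lemma mem_face_true (w f : Vtx m n) :
    ((w, true) ∈ faceEdges m n f) ↔ (w = f ∨ w = (f.1 + 1, f.2)) := by
  simp [faceEdges]

/-- Key parity computation: a vertex star and a face boundary always share an
even number of edges. -/
lemma Svf (v f : Vtx m n) :
    ∑ e : Edge m n, (if (e ∈ vertEdges m n v ∧ e ∈ faceEdges m n f)
      then (1 : ZMod 2) else 0) = 0 := by
  have hδ : ∀ e : Edge m n, (if (e ∈ vertEdges m n v ∧ e ∈ faceEdges m n f)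
      then (1 : ZMod 2) else 0) = δP (e ∈ vertEdges m n v) * δP (e ∈ faceEdges m n f) :=
    fun e => δP_and
  rw [Finset.sum_congr rfl fun e _ => hδ e, Fintype.sum_prod_type]
  have hb : ∀ w : Vtx m n, ∑ b : Bool,
      δP ((w, b) ∈ vertEdges m n v) * δP ((w, b) ∈ faceEdges m n f)
      = δP (w = v ∨ w = (v.1 - 1, v.2)) * δP (w = f ∨ w = (f.1, f.2 + 1))
        + δP (w = v ∨ w = (v.1, v.2 - 1)) * δP (w = f ∨ w = (f.1 + 1, f.2)) := by
    intro w
    rw [Fintype.sum_bool]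
    rw [δP_congr (mem_vert_false m n w v), δP_congr (mem_vert_true m n w v),
      δP_congr (mem_face_false m n w f), δP_congr (mem_face_true m n w f)]
    ring
  rw [Finset.sum_congr rfl fun w _ => hb w, Finset.sum_add_distrib, Tsum, Tsum]
  -- now identify the deltas
  have e1 : δP (v = (v.1 - 1, v.2)) = δP ((1 : Fin m) = 0) := by
    refine δP_congr ?_
    rw [Prod.ext_iff]
    constructor
    · rintro ⟨h, -⟩
      have := eq_sub_iff_add_eq.mp h
      simpa using (add_eq_left.mp this)
    · intro h
      exact ⟨by rw [show (1 : Fin m) = 0 from h, sub_zero], rfl⟩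
  have e2 : δP (v = (v.1, v.2 - 1)) = δP ((1 : Fin n) = 0) := by
    refine δP_congr ?_
    rw [Prod.ext_iff]
    constructor
    · rintro ⟨-, h⟩
      have := eq_sub_iff_add_eq.mp h
      simpa using (add_eq_left.mp this)
    · intro h
      exact ⟨rfl, by rw [show (1 : Fin n) = 0 from h, sub_zero]⟩
  have e3 : δP (f = (f.1, f.2 + 1)) = δP ((1 : Fin n) = 0) := by
    refine δP_congr ?_
    rw [Prod.ext_iff]
    constructor
    · rintro ⟨-, h⟩
      simpa using (left_eq_add.mp h)
    · intro h
      exact ⟨rfl, by rw [show (1 : Fin n) = 0 from h, add_zero]⟩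
  have e4 : δP (f = (f.1 + 1, f.2)) = δP ((1 : Fin m) = 0) := by
    refine δP_congr ?_
    rw [Prod.ext_iff]
    constructor
    · rintro ⟨h, -⟩
      simpa using (left_eq_add.mp h)
    · intro h
      exact ⟨by rw [show (1 : Fin m) = 0 from h, add_zero], rfl⟩
  have e5 : δP ((v.1 - 1, v.2) = f) = δP (v = (f.1 + 1, f.2)) := by
    refine δP_congr ?_
    rw [Prod.ext_iff, Prod.ext_iff]
    simp only [sub_eq_iff_eq_add]
  have e6 : δP ((v.1, v.2 - 1) = f) = δP (v = (f.1, f.2 + 1)) := by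
    refine δP_congr ?_
    rw [Prod.ext_iff, Prod.ext_iff]
    simp only [sub_eq_iff_eq_add]
  have e7 : δP ((v.1 - 1, v.2) = (f.1, f.2 + 1)) = δP (v = (f.1 + 1, f.2 + 1)) := by
    refine δP_congr ?_
    rw [Prod.ext_iff, Prod.ext_iff]
    simp only [sub_eq_iff_eq_add]
  have e8 : δP ((v.1, v.2 - 1) = (f.1 + 1, f.2)) = δP (v = (f.1 + 1, f.2 + 1)) := by
    refine δP_congr ?_
    rw [Prod.ext_iff, Prod.ext_iff]
    simp only [sub_eq_iff_eq_add]
  rw [e1, e2, e3, e4, e5, e6, e7, e8]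
  generalize δP ((1 : Fin m) = 0) = mu
  generalize δP ((1 : Fin n) = 0) = nu
  generalize δP (v = f) = p
  generalize δP (v = (f.1, f.2 + 1)) = q
  generalize δP (v = (f.1 + 1, f.2)) = r
  generalize δP (v = (f.1 + 1, f.2 + 1)) = s
  revert mu nu p q r s
  decide

end Mem

lemma sum_ite_and_eq {α : Type*} [Fintype α] [DecidableEq α] (P : α → Prop)
    [DecidablePred P] (a : α) :
    ∑ x : α, (if (P x ∧ x = a) then (1 : ZMod 2) else 0) = if P a then 1 else 0 := by
  rw [Finset.sum_eq_single a]
  · simp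
  · intro b _ hb; simp [hb]
  · simp

lemma UV_iff (m n : ℕ) [NeZero m] [NeZero n] (v : Vtx m n) (e0 : Edge m n) :
    (e0 ∈ faceEdges m n v) ↔ (Zedge m n e0 ∈ vertEdges m n v) := by
  obtain ⟨⟨w1, w2⟩, b⟩ := e0
  cases b
  · rw [show Zedge m n ((w1, w2), false) = ((w1, w2 - 1), true) from rfl,
      mem_face_false, mem_vert_true]
    simp only [Prod.ext_iff, sub_eq_iff_eq_add, sub_left_inj, sub_add_cancel]
    constructor
    · rintro (⟨h1, h2⟩ | ⟨h1, h2⟩)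
      · exact Or.inr ⟨h1, h2⟩
      · exact Or.inl ⟨h1, h2⟩
    · rintro (⟨h1, h2⟩ | ⟨h1, h2⟩)
      · exact Or.inr ⟨h1, h2⟩
      · exact Or.inl ⟨h1, h2⟩
  · rw [show Zedge m n ((w1, w2), true) = ((w1 - 1, w2), false) from rfl,
      mem_face_true, mem_vert_false]
    simp only [Prod.ext_iff, sub_eq_iff_eq_add, sub_left_inj, sub_add_cancel]
    constructor
    · rintro (⟨h1, h2⟩ | ⟨h1, h2⟩)
      · exact Or.inr ⟨h1, h2⟩
      · exact Or.inl ⟨h1, h2⟩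
    · rintro (⟨h1, h2⟩ | ⟨h1, h2⟩)
      · exact Or.inr ⟨h1, h2⟩
      · exact Or.inl ⟨h1, h2⟩

/-- The gauge operators `G_v` commute with every `U_e`, every `W_f`, and with
each other, hence generate an abelian stabilizer group. -/
theorem stmt16 (m n : ℕ) [NeZero m] [NeZero n] :
    (∀ (v : Vtx m n) (e : Edge m n), Gop m n v * Uop m n e = Uop m n e * Gop m n v) ∧
    (∀ v f : Vtx m n, Gop m n v * Wop m n f = Wop m n f * Gop m n v) ∧
    (∀ v v' : Vtx m n, Gop m n v * Gop m n v' = Gop m n v' * Gop m n v) := by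
  refine ⟨fun v e0 => ?_, fun v f => ?_, fun v v' => ?_⟩
  · rw [Gop_pf, Uop_pf]
    refine comm_pf m n _ _ _ _ ?_
    have step : ∀ e : Edge m n,
        ((if (decide (e ∈ faceEdges m n v) && decide (e = e0)) then (1 : ZMod 2) else 0)
          + (if (decide (e ∈ vertEdges m n v) && decide (e = Zedge m n e0)) then 1 else 0))
        = (if (e ∈ faceEdges m n v ∧ e = e0) then (1 : ZMod 2) else 0)
          + (if (e ∈ vertEdges m n v ∧ e = Zedge m n e0) then 1 else 0) := by
      intro e
      simp only [Bool.and_eq_true, decide_eq_true_eq]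
    rw [Finset.sum_congr rfl fun e _ => step e, Finset.sum_add_distrib,
      sum_ite_and_eq (fun e => e ∈ faceEdges m n v) e0,
      sum_ite_and_eq (fun e => e ∈ vertEdges m n v) (Zedge m n e0)]
    have : (if e0 ∈ faceEdges m n v then (1 : ZMod 2) else 0)
        = (if Zedge m n e0 ∈ vertEdges m n v then (1 : ZMod 2) else 0) :=
      δP_congr (UV_iff m n v e0)
    rw [this]
    exact δP_add_self
  · rw [Gop_pf, Wop_pf]
    refine comm_pf m n _ _ _ _ ?_
    have step : ∀ e : Edge m n,
        ((if (decide (e ∈ faceEdges m n v) && false) then (1 : ZMod 2) else 0)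
          + (if (decide (e ∈ vertEdges m n v) && decide (e ∈ faceEdges m n f)) then 1 else 0))
        = (if (e ∈ vertEdges m n v ∧ e ∈ faceEdges m n f) then (1 : ZMod 2) else 0) := by
      intro e
      simp only [Bool.and_false, Bool.and_eq_true, decide_eq_true_eq]
      rw [if_neg (by simp), zero_add]
    rw [Finset.sum_congr rfl fun e _ => step e]
    exact Svf m n v f
  · rw [Gop_pf, Gop_pf]
    refine comm_pf m n _ _ _ _ ?_
    have step : ∀ e : Edge m n,
        ((if (decide (e ∈ faceEdges m n v) && decide (e ∈ vertEdges m n v')) then (1 : ZMod 2) else 0)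
          + (if (decide (e ∈ vertEdges m n v) && decide (e ∈ faceEdges m n v')) then 1 else 0))
        = (if (e ∈ vertEdges m n v' ∧ e ∈ faceEdges m n v) then (1 : ZMod 2) else 0)
          + (if (e ∈ vertEdges m n v ∧ e ∈ faceEdges m n v') then 1 else 0) := by
      intro e
      simp only [Bool.and_eq_true, decide_eq_true_eq, and_comm]
    rw [Finset.sum_congr rfl fun e _ => step e, Finset.sum_add_distrib,
      Svf m n v' v, Svf m n v v', add_zero]

end
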